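/- arXiv:0811.0071 — 4 statements merged into one kernel-verified Lean document; each statement's English description precedes it below -/
import Mathlib

section
/- A nonempty subset C ⊆ S is closed under ⇢* (F(C) = C), and minimal among nonempty sets in the sense that every nonempty proper subset C' ⊊ C satisfies F(C') ⊄ C', if and only if C is a CP equilibrium, i.e., C is a strongly connected component under ⇢ (any two elements of C are related by ⇢*, in both directions) with no ⇢-edge leaving C. -/
def F {S : Type*} (r : S → S → Prop) (C : Set S) : Set S :=
  {s' | ∃ s ∈ C, Relation.ReflTransGen r s s'}

def IsCPEquilibrium {S : Type*} (r : S → S → Prop) (C : Set S) : Prop :=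
  C.Nonempty ∧
  (∀ s₁ ∈ C, ∀ s₂ ∈ C, Relation.ReflTransGen r s₁ s₂) ∧
  (∀ s ∈ C, ∀ s', r s s' → s' ∈ C)

/-!
`F` is the closure operator "everything reachable from", so its fixed points are the sets with
no edge leaving them. For `s₁` in a minimal fixed point `C`, the set `F r {s₁}` is again a nonempty
fixed point inside `C`, hence equals `C`: every `s₂ ∈ C` is reachable from `s₁`. Conversely, if `C`
is strongly connected, any nonempty `C' ⊂ C` reaches all of `C`, so `F r C' ⊄ C'`.
-/

open Relation

namespace F

variable {S : Type*} (r : S → S → Prop)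

theorem subset_self (C : Set S) : C ⊆ F r C :=
  fun s hs => ⟨s, hs, .refl⟩

theorem mono {C D : Set S} (h : C ⊆ D) : F r C ⊆ F r D :=
  fun _ ⟨s, hs, hss'⟩ => ⟨s, h hs, hss'⟩

@[simp]
theorem mem_singleton_iff {s s' : S} : s' ∈ F r {s} ↔ ReflTransGen r s s' := by
  simp [F]

theorem singleton_nonempty (s : S) : (F r {s}).Nonempty :=
  ⟨s, subset_self r {s} rfl⟩

theorem idem (C : Set S) : F r (F r C) = F r C :=
  Set.Subset.antisymm (fun _ ⟨_, ⟨s, hs, hst⟩, hts'⟩ => ⟨s, hs, hst.trans hts'⟩)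
    (subset_self r _)

theorem subset_self_iff {C : Set S} :
    F r C ⊆ C ↔ ∀ s ∈ C, ∀ s', r s s' → s' ∈ C := by
  refine ⟨fun h s hs s' hss' => h ⟨s, hs, .single hss'⟩, fun hclosed => ?_⟩
  rintro _ ⟨s, hs, hss'⟩
  induction hss' with
  | refl => exact hs
  | tail _ hstep ih => exact hclosed _ ih _ hstep

theorem eq_self_iff {C : Set S} :
    F r C = C ↔ ∀ s ∈ C, ∀ s', r s s' → s' ∈ C := by
  rw [← subset_self_iff, Set.Subset.antisymm_iff, and_iff_left (subset_self r C)]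

end F

section

variable {S : Type*} {r : S → S → Prop} {C : Set S}

theorem isCPEquilibrium_of_minimal (hfix : F r C = C) (hne : C.Nonempty)
    (hmin : ∀ C' : Set S, C'.Nonempty → C' ⊂ C → ¬ F r C' ⊆ C') : IsCPEquilibrium r C := by
  refine ⟨hne, fun s₁ hs₁ s₂ hs₂ => ?_, (F.eq_self_iff r).1 hfix⟩
  have hsub : F r {s₁} ⊆ C := hfix ▸ F.mono r (Set.singleton_subset_iff.2 hs₁)
  have heq : F r {s₁} = C := hsub.eq_of_not_ssubset fun hss =>
    hmin _ (F.singleton_nonempty r s₁) hss (F.idem r _).subset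
  exact (F.mem_singleton_iff r).1 (heq ▸ hs₂)

theorem IsCPEquilibrium.not_F_subset_of_ssubset (hC : IsCPEquilibrium r C) {C' : Set S}
    (hne : C'.Nonempty) (hC' : C' ⊂ C) : ¬ F r C' ⊆ C' := by
  obtain ⟨s', hs'⟩ := hne
  obtain ⟨s, hsC, hsC'⟩ := Set.exists_of_ssubset hC'
  exact fun hF => hsC' (hF ⟨s', hs', hC.2.1 s' (hC'.subset hs') s hsC⟩)

end

theorem least_fixed_point_iff_cp_equilibrium
    {S : Type*} (r : S → S → Prop) (C : Set S) :
    (F r C = C ∧ C.Nonempty ∧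
      ∀ C' : Set S, C'.Nonempty → C' ⊂ C → ¬ F r C' ⊆ C') ↔
    IsCPEquilibrium r C :=
  ⟨fun ⟨hfix, hne, hmin⟩ => isCPEquilibrium_of_minimal hfix hne hmin,
    fun hC => ⟨(F.eq_self_iff r).2 hC.2.2, hC.1,
      fun _ hne hC' => hC.not_F_subset_of_ssubset hne hC'⟩⟩
end

section
/- If C is a nonempty least fixed point of the update function F (i.e., F(C) = C, C ≠ ∅, and no nonempty proper subset C' ⊊ C satisfies F(C') ⊆ C'), then for any two elements s₁, s₂ ∈ C we have s₁ ⇢* s₂. -/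
/-!
For `s₁ ∈ C`, the set of states reachable from `s₁` is nonempty, closed under `F`, and contained
in `F(C) = C`; minimality of `C` forces it to be all of `C`.
-/

open Relation

namespace Relation

variable {S : Type*} (r : S → S → Prop)

/-- The update function `F`. -/
def reachableSet (C : Set S) : Set S := {s' | ∃ s ∈ C, ReflTransGen r s s'}

variable {r}

theorem reachableSet_mono {C D : Set S} (h : C ⊆ D) : reachableSet r C ⊆ reachableSet r D :=
  fun _ ⟨s, hs, hss'⟩ => ⟨s, h hs, hss'⟩

theorem reachableSet_reachableSet_subset (C : Set S) :
    reachableSet r (reachableSet r C) ⊆ reachableSet r C :=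
  fun _ ⟨_, ⟨s, hs, hst⟩, hts'⟩ => ⟨s, hs, hst.trans hts'⟩

theorem self_mem_reachableSet_singleton (s : S) : s ∈ reachableSet r {s} :=
  ⟨s, rfl, .refl⟩

theorem reflTransGen_of_mem_reachableSet_singleton {s s' : S}
    (h : s' ∈ reachableSet r {s}) : ReflTransGen r s s' := by
  obtain ⟨_, rfl, hss'⟩ := h
  exact hss'

end Relation

theorem least_fixed_point_mutually_reachable_general
    {S : Type*} (r : S → S → Prop) (C : Set S)
    (hfix : {s' | ∃ s ∈ C, Relation.ReflTransGen r s s'} = C)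
    (hleast : ∀ C' : Set S, C'.Nonempty → C' ⊂ C →
      ¬ {s' | ∃ s ∈ C', Relation.ReflTransGen r s s'} ⊆ C') :
    ∀ s₁ ∈ C, ∀ s₂ ∈ C, Relation.ReflTransGen r s₁ s₂ := by
  intro s₁ hs₁ s₂ hs₂
  have hsub : reachableSet r {s₁} ⊆ C :=
    hfix ▸ reachableSet_mono (Set.singleton_subset_iff.mpr hs₁)
  have hnot_ssubset : ¬ reachableSet r {s₁} ⊂ C := fun hss =>
    hleast _ ⟨s₁, self_mem_reachableSet_singleton s₁⟩ hss (reachableSet_reachableSet_subset _)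
  exact reflTransGen_of_mem_reachableSet_singleton <|
    (hsub.eq_of_not_ssubset hnot_ssubset) ▸ hs₂

theorem least_fixed_point_mutually_reachable
    {S : Type*} (r : S → S → Prop) (C : Set S)
    (hfix : {s' | ∃ s ∈ C, Relation.ReflTransGen r s s'} = C)
    (hne : C.Nonempty)
    (hleast : ∀ C' : Set S, C'.Nonempty → C' ⊂ C →
      ¬ {s' | ∃ s ∈ C', Relation.ReflTransGen r s s'} ⊆ C') :
    ∀ s₁ ∈ C, ∀ s₂ ∈ C, Relation.ReflTransGen r s₁ s₂ :=
  least_fixed_point_mutually_reachable_general r C hfix hleast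
end

section
/- If some situation s of a CP game can reach only finitely many situations via the reflexive-transitive closure of the change-of-mind relation, then the game has a CP equilibrium. -/
/-! Among the finitely many situations reachable from `s`, pick one, `t`, whose set of reachable
situations is minimal for inclusion. Every `u` reachable from `t` reaches a subset of it, so by
minimality `u` reaches `t` back; hence the situations reachable from `t` are pairwise related and
closed under change of mind, i.e. they form a CP equilibrium. -/

section

open Relation

variable {S : Type*} {r : S → S → Prop}

theorem isCPEquilibrium_reachable_of_forall_reachable_back {t : S}
    (hback : ∀ u, ReflTransGen r t u → ReflTransGen r u t) :
    IsCPEquilibrium r {u | ReflTransGen r t u} :=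
  ⟨⟨t, .refl⟩, fun _ hu _ hv => (hback _ hu).trans hv,
    fun _ hu _ hr => hu.tail hr⟩

theorem exists_reachable_back_of_finite_reachable {s : S}
    (hs : {u | ReflTransGen r s u}.Finite) :
    ∃ t, ∀ u, ReflTransGen r t u → ReflTransGen r u t := by
  obtain ⟨t, hst, hmin⟩ :=
    hs.exists_minimalFor (fun t => {u | ReflTransGen r t u}) _ ⟨s, .refl⟩
  refine ⟨t, fun u htu => ?_⟩
  have hsub : {v | ReflTransGen r u v} ⊆ {v | ReflTransGen r t v} := fun _ => htu.trans
  exact hmin (hst.trans htu) hsub .refl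

end

theorem cp_equilibrium_of_finitely_reachable
    {S : Type*} (r : S → S → Prop)
    (h : ∃ s : S, {s' | Relation.ReflTransGen r s s'}.Finite) :
    ∃ C : Set S, IsCPEquilibrium r C := by
  obtain ⟨s, hs⟩ := h
  obtain ⟨t, hback⟩ := exists_reachable_back_of_finite_reachable hs
  exact ⟨_, isCPEquilibrium_reachable_of_forall_reachable_back hback⟩
end

section
/- In the Chinese Wall CP game, every situation reachable from the empty situation (where no subject has accessed any object) via any change-of-mind relation derived from any family of preference relations satisfies the no-insider-trading property: for every subject p and every pair of objects o₁, o₂ accessed by p, either their companies belong to different interest classes or they belong to the same company. -/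
/-!
A conversion step only grants a subject an object compatible with every object it already
holds, so no-insider-trading is preserved by each step; it holds vacuously in the empty situation.
-/

/-- Chinese Wall conversion relation for subject `p`. -/
def CWConv {P O Comp I : Type*} (classify : Comp → I) (owner : O → Comp)
    (p : P) (s s' : P → Set O) : Prop :=
  (∀ p', p' ≠ p → s' p' = s p') ∧
  ∃ o : O, s' p = s p ∪ {o} ∧
    ∀ o' ∈ s p, classify (owner o) ≠ classify (owner o') ∨ owner o = owner o'

/-- No insider trading. -/
def NIT {P O Comp I : Type*} (classify : Comp → I) (owner : O → Comp)
    (s : P → Set O) : Prop :=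
  ∀ p : P, ∀ o₁ ∈ s p, ∀ o₂ ∈ s p,
    classify (owner o₁) ≠ classify (owner o₂) ∨ owner o₁ = owner o₂

namespace NIT

variable {P O Comp I : Type*} {classify : Comp → I} {owner : O → Comp}

theorem empty : NIT classify owner (fun _ : P => (∅ : Set O)) :=
  fun _ _ h₁ => absurd h₁ (Set.notMem_empty _)

theorem of_cwConv {p : P} {s s' : P → Set O} (hs : NIT classify owner s)
    (hconv : CWConv classify owner p s s') : NIT classify owner s' := by
  obtain ⟨hother, o, hnew, hcompat⟩ := hconv
  intro q
  rcases eq_or_ne q p with rfl | hqp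
  · rw [hnew]
    rintro o₁ (h₁ | rfl) o₂ (h₂ | rfl)
    · exact hs q o₁ h₁ o₂ h₂
    · exact (hcompat o₁ h₁).imp Ne.symm Eq.symm
    · exact hcompat o₂ h₂
    · exact Or.inr rfl
  · rw [hother q hqp]
    exact hs q

end NIT

theorem chinese_wall_no_insider_trading
    {P O Comp I : Type*} (classify : Comp → I) (owner : O → Comp)
    (pref : P → (P → Set O) → (P → Set O) → Prop)
    (s : P → Set O)
    (h : Relation.ReflTransGen
          (fun s s' => ∃ p, CWConv classify owner p s s' ∧ pref p s s')
          (fun _ => (∅ : Set O)) s) :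
    NIT classify owner s := by
  induction h with
  | refl => exact NIT.empty
  | tail _ step ih =>
    obtain ⟨p, hconv, -⟩ := step
    exact ih.of_cwConv hconv
end
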